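/- For all integers b, d > 1 and all vertices v, w of DB(b,d), the directed graph distance from v to w in DB(b,d) (the minimum length of a directed path from v to w) equals the de Bruijn (shift) distance dist(v,w). In particular, DB(b,d) is strongly connected with directed diameter at most d, and greedy routing finds paths of length at most d. -/

import Mathlib

/-- Edge relation of the de Bruijn graph `DB(b,d)`:
there is an edge `v → w` iff `w = (v₂,…,v_d,x)` for some symbol `x`. -/
def dbEdge {b d : ℕ} (v w : Fin d → Fin b) : Prop :=
  ∀ i : Fin d, ∀ h : i.val + 1 < d, w i = v ⟨i.val + 1, h⟩

/-- `v` matches `w` after `k` left shifts: `v_{i+k} = w_i` for all valid `i` (0-indexed). -/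
def dbMatches {b d : ℕ} (v w : Fin d → Fin b) (k : ℕ) : Prop :=
  ∀ i : ℕ, ∀ h : i + k < d, v ⟨i + k, h⟩ = w ⟨i, by omega⟩

/-- The de Bruijn (shift) distance: the least `k` such that `v` matches `w` after `k` shifts. -/
noncomputable def dbDist {b d : ℕ} (v w : Fin d → Fin b) : ℕ :=
  sInf {k | dbMatches v w k}

/-- There is a directed path of length `n` from `v` to `t` in the digraph given by relation `r`. -/
def hasPath {α : Type*} (r : α → α → Prop) (v t : α) (n : ℕ) : Prop :=
  ∃ p : Fin (n + 1) → α, p 0 = v ∧ p (Fin.last n) = t ∧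
    ∀ i : Fin n, r (p i.castSucc) (p i.succ)

/-- Directed graph distance: minimum length of a directed path from `v` to `t`. -/
noncomputable def graphDist {α : Type*} (r : α → α → Prop) (v t : α) : ℕ :=
  sInf {n | hasPath r v t n}

/-- A directed matching: every vertex is the tail of at most one edge
and the head of at most one edge. -/
def isDirectedMatching {α : Type*} (M : α → α → Prop) : Prop :=
  (∀ v w w', M v w → M v w' → w = w') ∧ (∀ v v' w, M v w → M v' w → v = v')

/-- The out-neighbor of `v` obtained by shifting left and inserting `x` as last symbol. -/
def dbShiftIn {b d : ℕ} (v : Fin d → Fin b) (x : Fin b) : Fin d → Fin b :=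
  fun i => if h : i.val + 1 < d then v ⟨i.val + 1, h⟩ else x

/-
A walk of length `n` in `DB(b,d)` shifts the word left by one symbol per step, so its
endpoint agrees with the start shifted by `n`; conversely, if `w` agrees with `v` shifted by
`k`, then feeding in the last `k` symbols of `w` one at a time is a walk of length `k`. Thus
walks of length `n` from `v` to `w` exist exactly when `dbMatches v w n`, and the two
distances are the infimum of the same set. For `k ≥ d` the matching condition is vacuous,
which bounds the diameter by `d`.
-/

section DeBruijn

variable {b d : ℕ}

lemma dbMatches_of_le {v w : Fin d → Fin b} {k : ℕ} (hk : d ≤ k) : dbMatches v w k :=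
  fun _ h => absurd h (by omega)

lemma hasPath_dbEdge_of_dbMatches {v w : Fin d → Fin b} {k : ℕ} (hm : dbMatches v w k) :
    hasPath dbEdge v w k := by
  -- after `j` steps the walk reads the window at offset `j` of the infinite word `v ++ (tail of w)`
  refine ⟨fun j i => if h : i.val + j.val < d then v ⟨i.val + j.val, h⟩
      else w ⟨i.val + j.val - k, by omega⟩, ?_, ?_, ?_⟩
  · funext i
    simp
  · funext i
    by_cases h : i.val + k < d
    · simpa [h] using hm i.val h
    · simp only [Fin.val_last, dif_neg h]
      congr 1
      ext
      simp
  · intro j i hi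
    simp only [Fin.val_castSucc, Fin.val_succ]
    split_ifs <;> first | omega | (congr 1; ext; simp only; omega)

lemma dbEdge_walk_apply {n : ℕ} {p : Fin (n + 1) → Fin d → Fin b}
    (hp : ∀ j : Fin n, dbEdge (p j.castSucc) (p j.succ)) (j : ℕ) (hj : j ≤ n) (i : ℕ)
    (hi : i + j < d) : p ⟨j, by omega⟩ ⟨i, by omega⟩ = p 0 ⟨i + j, hi⟩ := by
  induction j generalizing i with
  | zero => rfl
  | succ j ih =>
    calc p ⟨j + 1, by omega⟩ ⟨i, by omega⟩ = p ⟨j, by omega⟩ ⟨i + 1, by omega⟩ :=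
          hp ⟨j, by omega⟩ ⟨i, by omega⟩ (by simp only; omega)
      _ = p 0 ⟨i + 1 + j, by omega⟩ := ih (by omega) (i + 1) (by omega)
      _ = p 0 ⟨i + (j + 1), hi⟩ := by congr 2; omega

lemma dbMatches_of_hasPath_dbEdge {v w : Fin d → Fin b} {n : ℕ} (hp : hasPath dbEdge v w n) :
    dbMatches v w n := by
  obtain ⟨p, rfl, rfl, hp⟩ := hp
  intro i hi
  exact (dbEdge_walk_apply hp n le_rfl i hi).symm

lemma hasPath_dbEdge_iff_dbMatches {v w : Fin d → Fin b} {n : ℕ} :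
    hasPath dbEdge v w n ↔ dbMatches v w n :=
  ⟨dbMatches_of_hasPath_dbEdge, hasPath_dbEdge_of_dbMatches⟩

end DeBruijn

theorem kevin_graph_distance_eq_shift_distance_general (b d : ℕ) :
    (∀ v w : Fin d → Fin b, graphDist dbEdge v w = dbDist v w) ∧
    (∀ v w : Fin d → Fin b, ∃ m ≤ d, hasPath dbEdge v w m) := by
  refine ⟨fun v w => ?_, fun v w => ⟨d, le_rfl, ?_⟩⟩
  · simp only [graphDist, dbDist, hasPath_dbEdge_iff_dbMatches]
  · exact hasPath_dbEdge_of_dbMatches (dbMatches_of_le le_rfl)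

/-- For all vertices `v, w` of `DB(b,d)`, the directed graph distance from `v`
to `w` in `DB(b,d)` equals the de Bruijn shift distance. In particular `DB(b,d)` is strongly
connected with directed diameter at most `d` (greedy routing finds paths of length at most `d`). -/
theorem kevin_graph_distance_eq_shift_distance (b d : ℕ) (hb : 1 < b) (hd : 1 < d) :
    (∀ v w : Fin d → Fin b, graphDist dbEdge v w = dbDist v w) ∧
    (∀ v w : Fin d → Fin b, ∃ m ≤ d, hasPath dbEdge v w m) :=
  kevin_graph_distance_eq_shift_distance_general b d
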